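/- arXiv:2412.02304 — 4 statements merged into one kernel-verified Lean document; each statement's English description precedes it below -/
import Mathlib

section
/- (Smoothness of the MLS approximant.) Let ν ∈ ℕ, let Ω ⊆ ℝⁿ be open, and let w₁,…,w_N : Ω → ℝ be functions of class C^ν on Ω with w_i(x) > 0 for all x ∈ Ω and all i. For x ∈ Ω let X(x) be the N × m matrix whose i-th row is ((x_i − x)^α)_{|α| ≤ d} (entries are polynomial functions of x), with fixed nodes x₁,…,x_N ∈ ℝⁿ, and let W(x) = diag(w₁(x),…,w_N(x)). Assume X(x) has rank m for every x ∈ Ω. Then for every fixed data vector f ∈ ℝ^N, the function Ω → ℝ given by x ↦ e₁ᵀ (X(x)ᵀ W(x) X(x))⁻¹ X(x)ᵀ W(x) f is of class C^ν on Ω. -/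
open Matrix

section aux
variable {ν n : ℕ} {Ω : Set (Fin n → ℝ)} {ι : Type*} [Fintype ι] [DecidableEq ι]

lemma aux_contDiffOn_det (M : (Fin n → ℝ) → Matrix ι ι ℝ)
    (h : ∀ i j, ContDiffOn ℝ ν (fun x => M x i j) Ω) :
    ContDiffOn ℝ ν (fun x => (M x).det) Ω := by
  simp only [Matrix.det_apply']
  exact ContDiffOn.sum fun σ _ =>
    contDiffOn_const.mul (contDiffOn_prod fun i _ => h (σ i) i)

lemma aux_contDiffOn_adjugate (M : (Fin n → ℝ) → Matrix ι ι ℝ)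
    (h : ∀ i j, ContDiffOn ℝ ν (fun x => M x i j) Ω) (p q : ι) :
    ContDiffOn ℝ ν (fun x => (M x).adjugate p q) Ω := by
  simp only [Matrix.adjugate_apply]
  apply aux_contDiffOn_det
  intro i j
  simp only [Matrix.updateRow_apply]
  by_cases hi : i = q
  · simp only [hi, if_pos rfl]; exact contDiffOn_const
  · simp only [if_neg hi]; exact h i j

lemma aux_isUnit_of_rank_eq (A : Matrix ι ι ℝ) (h : A.rank = Fintype.card ι) : IsUnit A := by
  rw [← Matrix.mulVec_surjective_iff_isUnit]
  have hr : LinearMap.range A.mulVecLin = ⊤ := by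
    apply Submodule.eq_top_of_finrank_eq
    rw [show Module.finrank ℝ (LinearMap.range A.mulVecLin) = A.rank from rfl, h]
    simp [Module.finrank_fintype_fun_eq_card]
  intro y
  obtain ⟨v, hv⟩ := LinearMap.range_eq_top.mp hr y
  exact ⟨v, hv⟩

end aux

/-- Smoothness of the MLS approximant: if the weight functions
`wᵢ : Ω → ℝ` are `C^ν` and positive on the open set `Ω ⊆ ℝⁿ`, the design matrix `X(x)`
(with shifted-monomial entries, columns enumerating the multi-indices of degree `≤ d`)
has rank `m` for all `x ∈ Ω`, then for every fixed data vector `f ∈ ℝᴺ` the map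
`x ↦ e₁ᵀ (X(x)ᵀ W(x) X(x))⁻¹ X(x)ᵀ W(x) f` is `C^ν` on `Ω`. -/
theorem MLS_approximant_contDiffOn
    (ν n N m d : ℕ) (hm : 0 < m)
    (Ω : Set (Fin n → ℝ)) (hΩ : IsOpen Ω)
    (w : Fin N → (Fin n → ℝ) → ℝ)
    (hw_smooth : ∀ i, ContDiffOn ℝ ν (w i) Ω)
    (hw_pos : ∀ i, ∀ x ∈ Ω, 0 < w i x)
    (nodes : Fin N → (Fin n → ℝ))
    (ms : Fin m → (Fin n →₀ ℕ))
    (hms_inj : Function.Injective ms)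
    (hms_deg : ∀ j, (ms j).degree ≤ d)
    (hms_surj : ∀ α : Fin n →₀ ℕ, α.degree ≤ d → ∃ j, ms j = α)
    (X : (Fin n → ℝ) → Matrix (Fin N) (Fin m) ℝ)
    (hX : ∀ x i j, X x i j = ∏ k : Fin n, (nodes i k - x k) ^ (ms j k))
    (hrank : ∀ x ∈ Ω, (X x).rank = m)
    (f : Fin N → ℝ) :
    ContDiffOn ℝ ν
      (fun x =>
        ((((X x)ᵀ * Matrix.diagonal (fun i => w i x) * X x)⁻¹ *
            (X x)ᵀ * Matrix.diagonal (fun i => w i x)) *ᵥ f) ⟨0, hm⟩)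
      Ω := by
  set B : (Fin n → ℝ) → Matrix (Fin m) (Fin m) ℝ :=
    fun x => (X x)ᵀ * Matrix.diagonal (fun i => w i x) * X x with hB
  -- entries of X are smooth
  have hXe : ∀ i j, ContDiffOn ℝ ν (fun x => X x i j) Ω := by
    intro i j
    have : (fun x => X x i j) = fun x : Fin n → ℝ =>
        ∏ k : Fin n, (nodes i k - x k) ^ (ms j k) := funext fun x => hX x i j
    rw [this]
    refine contDiffOn_prod fun k _ => ContDiffOn.pow ?_ _
    exact (contDiffOn_const.sub ((ContinuousLinearMap.proj k :
      (Fin n → ℝ) →L[ℝ] ℝ).contDiff.contDiffOn))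
  -- entries of B are smooth
  have hBe : ∀ p q, ContDiffOn ℝ ν (fun x => B x p q) Ω := by
    intro p q
    have : (fun x => B x p q) = fun x =>
        ∑ i : Fin N, (X x i p * w i x) * X x i q := by
      funext x
      simp [hB, Matrix.mul_apply, Matrix.diagonal_apply, mul_ite, ite_mul, mul_zero,
        zero_mul, Finset.sum_ite_eq, Finset.sum_ite_eq']
    rw [this]
    exact ContDiffOn.sum fun i _ => ((hXe i p).mul (hw_smooth i)).mul (hXe i q)
  -- B is invertible on Ω
  have hdet : ∀ x ∈ Ω, (B x).det ≠ 0 := by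
    intro x hx
    have : IsUnit (B x) := by
      apply aux_isUnit_of_rank_eq
      set S : Matrix (Fin N) (Fin N) ℝ :=
        Matrix.diagonal (fun i => Real.sqrt (w i x)) with hS
      have hSS : S * S = Matrix.diagonal (fun i => w i x) := by
        rw [hS, Matrix.diagonal_mul_diagonal]
        exact congrArg _ (funext fun i => Real.mul_self_sqrt (hw_pos i x hx).le)
      have hBx : B x = (S * X x)ᵀ * (S * X x) := by
        rw [hB]
        dsimp only
        rw [Matrix.transpose_mul]
        rw [show Sᵀ = S by rw [hS, Matrix.diagonal_transpose]]
        rw [← hSS]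
        simp only [Matrix.mul_assoc]
      have hdetS : IsUnit S.det := by
        rw [hS, Matrix.det_diagonal]
        exact isUnit_iff_ne_zero.mpr (Finset.prod_ne_zero_iff.mpr fun i _ =>
          (Real.sqrt_pos.mpr (hw_pos i x hx)).ne')
      rw [hBx, Matrix.rank_transpose_mul_self,
        Matrix.rank_mul_eq_right_of_isUnit_det S (X x) hdetS, hrank x hx,
        Fintype.card_fin]
    exact ((Matrix.isUnit_iff_isUnit_det _).mp this).ne_zero
  -- entries of B⁻¹ are smooth
  have hinv : ∀ p q, ContDiffOn ℝ ν (fun x => (B x)⁻¹ p q) Ω := by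
    intro p q
    have : (fun x => (B x)⁻¹ p q) =
        fun x => ((B x).det)⁻¹ * (B x).adjugate p q := by
      funext x
      rw [Matrix.inv_def, Matrix.smul_apply, Ring.inverse_eq_inv', smul_eq_mul]
    rw [this]
    exact ((aux_contDiffOn_det B hBe).inv hdet).mul (aux_contDiffOn_adjugate B hBe p q)
  -- final assembly
  have key : (fun x =>
        (((B x)⁻¹ * (X x)ᵀ * Matrix.diagonal (fun i => w i x)) *ᵥ f) ⟨0, hm⟩) =
      fun x => ∑ i : Fin N,
        ((∑ j : Fin m, (B x)⁻¹ ⟨0, hm⟩ j * X x i j) * w i x) * f i := by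
    funext x
    simp [Matrix.mulVec, dotProduct, Matrix.mul_apply, Matrix.diagonal_apply,
      mul_ite, ite_mul, mul_zero, zero_mul, Finset.sum_ite_eq, Finset.sum_ite_eq']
  rw [show (fun x =>
        ((((X x)ᵀ * Matrix.diagonal (fun i => w i x) * X x)⁻¹ *
            (X x)ᵀ * Matrix.diagonal (fun i => w i x)) *ᵥ f) ⟨0, hm⟩) =
      (fun x =>
        (((B x)⁻¹ * (X x)ᵀ * Matrix.diagonal (fun i => w i x)) *ᵥ f) ⟨0, hm⟩) from rfl,
    key]
  exact ContDiffOn.sum fun i _ =>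
    ((ContDiffOn.sum fun j _ => (hinv ⟨0, hm⟩ j).mul (hXe i j)).mul (hw_smooth i)).mul
      contDiffOn_const
end

section
/- (Quantitative order of accuracy of MLS, Corollary of polynomial reproduction.) Let d ≥ 0, x₀ ∈ ℝⁿ, r > 0, and let x₁,…,x_N lie in the closed ball B̄(x₀, r). Let a₁,…,a_N ∈ ℝ satisfy Σ_i a_i π(x_i) = π(x₀) for every π ∈ Π_d(ℝⁿ), and assume Σ_i |a_i| ≤ Λ. Let f : ℝⁿ → ℝ be of class C^{d+1} on an open convex set U containing B̄(x₀, r), with ‖D^{d+1}f(y)‖ ≤ M (operator norm of the (d+1)-st iterated Fréchet derivative) for all y ∈ U. Then |f(x₀) − Σ_{i=1}^N a_i f(x_i)| ≤ (1 + Λ) · M · r^{d+1} / (d+1)!. -/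
/-!
Let `T` be the Taylor polynomial of `f` of degree `d` at `x₀`. Written in coordinates it is a
polynomial of total degree `≤ d`, so the coefficients reproduce it: `∑ aᵢ T(xᵢ) = T(x₀)`. Hence
`f(x₀) − ∑ aᵢ f(xᵢ) = (f − T)(x₀) − ∑ aᵢ (f − T)(xᵢ)`, which is at most `(1 + ∑ |aᵢ|)` times the
supremum of `|f − T|` on `B̄(x₀, r)`, and the integral form of the Taylor remainder along the segment
from `x₀` bounds that supremum by `M r^{d+1} / (d+1)!`.
-/

open Set Finset Nat

theorem abs_sub_sum_mul_le_of_sum_mul_eq {X ι : Type*} [Fintype ι] {f p : X → ℝ} {x₀ : X}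
    {x : ι → X} {a : ι → ℝ} (hp : ∑ i, a i * p (x i) = p x₀) {ε : ℝ}
    (h₀ : |f x₀ - p x₀| ≤ ε) (h : ∀ i, |f (x i) - p (x i)| ≤ ε) :
    |f x₀ - ∑ i, a i * f (x i)| ≤ (1 + ∑ i, |a i|) * ε := by
  have hsplit : f x₀ - ∑ i, a i * f (x i) = (f x₀ - p x₀) - ∑ i, a i * (f (x i) - p (x i)) := by
    simp only [mul_sub, sum_sub_distrib, hp]
    ring
  calc |f x₀ - ∑ i, a i * f (x i)|
      ≤ |f x₀ - p x₀| + ∑ i, |a i| * |f (x i) - p (x i)| := by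
        rw [hsplit]
        refine (abs_sub _ _).trans ?_
        gcongr
        exact (abs_sum_le_sum_abs _ _).trans_eq (by simp only [abs_mul])
    _ ≤ ε + ∑ i, |a i| * ε := by gcongr with i; exact h i
    _ = (1 + ∑ i, |a i|) * ε := by rw [← sum_mul]; ring

/-- `Π_d(ℝ^ι)`, as a space of functions. -/
noncomputable def polynomialFunctionsLE (ι : Type*) (d : ℕ) :
    Submodule ℝ (EuclideanSpace ℝ ι → ℝ) :=
  (MvPolynomial.restrictTotalDegree ι ℝ d).map
    (LinearMap.pi fun y : EuclideanSpace ℝ ι ↦ (MvPolynomial.aeval y.ofLp).toLinearMap)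

namespace polynomialFunctionsLE

variable {ι : Type*}

theorem mem_iff {d : ℕ} {g : EuclideanSpace ℝ ι → ℝ} :
    g ∈ polynomialFunctionsLE ι d ↔
      ∃ π : MvPolynomial ι ℝ, π.totalDegree ≤ d ∧ ∀ y, MvPolynomial.eval y.ofLp π = g y := by
  simp [polynomialFunctionsLE, Submodule.mem_map, MvPolynomial.mem_restrictTotalDegree, funext_iff]

theorem mono : Monotone (polynomialFunctionsLE ι) := fun _ _ hde _ hg ↦ by
  obtain ⟨π, hπ, hπg⟩ := mem_iff.1 hg
  exact mem_iff.2 ⟨π, hπ.trans hde, hπg⟩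

theorem prod_sub_mem {k : ℕ} (m : Fin k → ι) (c : ι → ℝ) :
    (fun y : EuclideanSpace ℝ ι ↦ ∏ j, (y (m j) - c (m j))) ∈ polynomialFunctionsLE ι k := by
  have hfactor : ∀ j, (MvPolynomial.X (m j) - MvPolynomial.C (c (m j)) :
      MvPolynomial ι ℝ).totalDegree ≤ 1 := fun j ↦
    (MvPolynomial.totalDegree_sub_C_le _ _).trans (MvPolynomial.totalDegree_X _).le
  refine mem_iff.2 ⟨∏ j, (MvPolynomial.X (m j) - MvPolynomial.C (c (m j))), ?_, fun y ↦ by simp⟩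
  calc _ ≤ ∑ j, (MvPolynomial.X (m j) - MvPolynomial.C (c (m j)) :
          MvPolynomial ι ℝ).totalDegree := MvPolynomial.totalDegree_finsetProd _ _
    _ ≤ ∑ _j : Fin k, 1 := sum_le_sum fun j _ ↦ hfactor j
    _ = k := by simp

theorem multilinearMap_sub_mem [Fintype ι] {k : ℕ}
    (L : MultilinearMap ℝ (fun _ : Fin k ↦ EuclideanSpace ℝ ι) ℝ) (x₀ : EuclideanSpace ℝ ι) :
    (fun y ↦ L (fun _ ↦ y - x₀)) ∈ polynomialFunctionsLE ι k := by
  classical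
  have hexpand : (fun y ↦ L (fun _ ↦ y - x₀)) = ∑ m : Fin k → ι,
      L (fun j ↦ EuclideanSpace.single (m j) 1) • fun y ↦ ∏ j, (y (m j) - x₀ (m j)) := by
    funext y
    conv_lhs => rw [← (EuclideanSpace.basisFun ι ℝ).sum_repr (y - x₀)]
    rw [L.map_sum, Finset.sum_apply]
    refine sum_congr rfl fun m _ ↦ ?_
    simp [L.map_smul_univ, mul_comm]
  rw [hexpand]
  exact Submodule.sum_mem _ fun m _ ↦ Submodule.smul_mem _ _ (prod_sub_mem m x₀)

end polynomialFunctionsLE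

theorem integral_one_sub_pow (n : ℕ) : ∫ t in (0 : ℝ)..1, (1 - t) ^ n = 1 / (n + 1) := by
  simp [intervalIntegral.integral_comp_sub_left (fun t : ℝ ↦ t ^ n)]

section Taylor

variable {E F : Type*} [NormedAddCommGroup E] [NormedSpace ℝ E]
  [NormedAddCommGroup F] [NormedSpace ℝ F]

noncomputable def taylorEval (f : E → F) (n : ℕ) (x₀ y : E) : F :=
  ∑ k ∈ range (n + 1), (k ! : ℝ)⁻¹ • iteratedFDeriv ℝ k f x₀ (fun _ ↦ y - x₀)

variable [CompleteSpace F]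

theorem norm_map_add_sub_sum_iteratedFDeriv_le {f : E → F} {x y : E} {n : ℕ} {M : ℝ}
    (hf : ∀ t ∈ Icc (0 : ℝ) 1, ContDiffAt ℝ (n + 1) f (x + t • y))
    (hM : ∀ t ∈ Icc (0 : ℝ) 1, ‖iteratedFDeriv ℝ (n + 1) f (x + t • y)‖ ≤ M) :
    ‖f (x + y) - ∑ k ∈ range (n + 1), (k ! : ℝ)⁻¹ • iteratedFDeriv ℝ k f x (fun _ ↦ y)‖ ≤
      M * ‖y‖ ^ (n + 1) / (n + 1)! := by
  rw [map_add_eq_sum_add_integral_iteratedFDeriv hf, add_sub_cancel_left, norm_smul,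
    norm_inv, RCLike.norm_natCast]
  have hint : ‖∫ t in (0 : ℝ)..1, (1 - t) ^ n • iteratedFDeriv ℝ (n + 1) f (x + t • y) (fun _ ↦ y)‖
      ≤ ∫ t in (0 : ℝ)..1, (1 - t) ^ n * (M * ‖y‖ ^ (n + 1)) := by
    refine intervalIntegral.norm_integral_le_of_norm_le zero_le_one
      (Filter.Eventually.of_forall fun t ht ↦ ?_) (Continuous.intervalIntegrable (by fun_prop) _ _)
    have ht' : t ∈ Icc (0 : ℝ) 1 := Ioc_subset_Icc_self ht
    have hweight : 0 ≤ (1 - t) ^ n := pow_nonneg (sub_nonneg.2 ht'.2) _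
    rw [norm_smul, Real.norm_of_nonneg hweight]
    gcongr
    · calc _ ≤ ‖iteratedFDeriv ℝ (n + 1) f (x + t • y)‖ * ∏ _i : Fin (n + 1), ‖y‖ :=
            ContinuousMultilinearMap.le_opNorm _ _
        _ ≤ M * ‖y‖ ^ (n + 1) := by
            rw [prod_const, Finset.card_univ, Fintype.card_fin]
            gcongr
            exact hM t ht'
  rw [intervalIntegral.integral_mul_const, integral_one_sub_pow] at hint
  calc _ ≤ (n ! : ℝ)⁻¹ * (1 / (n + 1) * (M * ‖y‖ ^ (n + 1))) := by gcongr
    _ = M * ‖y‖ ^ (n + 1) / (n + 1)! := by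
      rw [factorial_succ]; push_cast; field_simp

theorem norm_sub_taylorEval_le {f : E → F} {x₀ y : E} {n : ℕ} {r M : ℝ}
    (hf : ∀ z ∈ Metric.closedBall x₀ r, ContDiffAt ℝ (n + 1) f z)
    (hM : ∀ z ∈ Metric.closedBall x₀ r, ‖iteratedFDeriv ℝ (n + 1) f z‖ ≤ M)
    (hy : y ∈ Metric.closedBall x₀ r) :
    ‖f y - taylorEval f n x₀ y‖ ≤ M * r ^ (n + 1) / (n + 1)! := by
  have hx₀ : x₀ ∈ Metric.closedBall x₀ r := Metric.mem_closedBall_self (dist_nonneg.trans hy)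
  have hseg : ∀ t ∈ Icc (0 : ℝ) 1, x₀ + t • (y - x₀) ∈ Metric.closedBall x₀ r := fun t ht ↦
    (convex_closedBall x₀ r).add_smul_sub_mem hx₀ hy ht
  have h := norm_map_add_sub_sum_iteratedFDeriv_le (fun t ht ↦ hf _ (hseg t ht))
    (fun t ht ↦ hM _ (hseg t ht))
  rw [add_sub_cancel] at h
  refine h.trans ?_
  have hM₀ : 0 ≤ M := (norm_nonneg _).trans (hM x₀ hx₀)
  gcongr
  exact mem_closedBall_iff_norm.1 hy

end Taylor

theorem taylorEval_mem_polynomialFunctionsLE {ι : Type*} [Fintype ι]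
    (f : EuclideanSpace ℝ ι → ℝ) (n : ℕ) (x₀ : EuclideanSpace ℝ ι) :
    taylorEval f n x₀ ∈ polynomialFunctionsLE ι n := by
  have hsum : taylorEval f n x₀ = ∑ k ∈ range (n + 1),
      (k ! : ℝ)⁻¹ • fun y ↦ iteratedFDeriv ℝ k f x₀ (fun _ ↦ y - x₀) := by
    funext y
    simp [taylorEval, Finset.sum_apply]
  rw [hsum]
  refine Submodule.sum_mem _ fun k hk ↦ Submodule.smul_mem _ _ ?_
  exact polynomialFunctionsLE.mono (Nat.lt_succ_iff.1 (mem_range.1 hk))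
    (polynomialFunctionsLE.multilinearMap_sub_mem (iteratedFDeriv ℝ k f x₀).toMultilinearMap x₀)

theorem MLS_order_of_accuracy_general
    (n N d : ℕ)
    (x₀ : EuclideanSpace ℝ (Fin n)) (r : ℝ) (hr : 0 < r)
    (x : Fin N → EuclideanSpace ℝ (Fin n))
    (hx : ∀ i, x i ∈ Metric.closedBall x₀ r)
    (a : Fin N → ℝ)
    (hrepro : ∀ π : MvPolynomial (Fin n) ℝ, π.totalDegree ≤ d →
      ∑ i, a i * MvPolynomial.eval (x i) π = MvPolynomial.eval x₀ π)
    (Λ : ℝ) (hΛ : ∑ i, |a i| ≤ Λ)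
    (U : Set (EuclideanSpace ℝ (Fin n))) (hU : IsOpen U)
    (hUball : Metric.closedBall x₀ r ⊆ U)
    (f : EuclideanSpace ℝ (Fin n) → ℝ) (M : ℝ)
    (hf : ContDiffOn ℝ (d + 1) f U)
    (hM : ∀ y ∈ U, ‖iteratedFDerivWithin ℝ (d + 1) f U y‖ ≤ M) :
    |f x₀ - ∑ i, a i * f (x i)| ≤
      (1 + Λ) * M * r ^ (d + 1) / (Nat.factorial (d + 1)) := by
  set T := taylorEval f d x₀
  have hM' : ∀ z ∈ Metric.closedBall x₀ r, ‖iteratedFDeriv ℝ (d + 1) f z‖ ≤ M := fun z hz ↦ by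
    rw [← iteratedFDerivWithin_of_isOpen (d + 1) hU (hUball hz)]
    exact hM z (hUball hz)
  have hremainder : ∀ y ∈ Metric.closedBall x₀ r, |f y - T y| ≤ M * r ^ (d + 1) / (d + 1)! :=
    fun y hy ↦ norm_sub_taylorEval_le (fun z hz ↦ hf.contDiffAt (hU.mem_nhds (hUball hz))) hM' hy
  have hreproT : ∑ i, a i * T (x i) = T x₀ := by
    obtain ⟨π, hπd, hπT⟩ :=
      polynomialFunctionsLE.mem_iff.1 (taylorEval_mem_polynomialFunctionsLE f d x₀)
    simpa only [hπT] using hrepro π hπd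
  have hx₀ : |f x₀ - T x₀| ≤ M * r ^ (d + 1) / (d + 1)! :=
    hremainder x₀ (Metric.mem_closedBall_self hr.le)
  calc |f x₀ - ∑ i, a i * f (x i)|
      ≤ (1 + ∑ i, |a i|) * (M * r ^ (d + 1) / (d + 1)!) :=
        abs_sub_sum_mul_le_of_sum_mul_eq hreproT hx₀ fun i ↦ hremainder (x i) (hx i)
    _ ≤ (1 + Λ) * (M * r ^ (d + 1) / (d + 1)!) := by
        gcongr
        exact (abs_nonneg _).trans hx₀
    _ = (1 + Λ) * M * r ^ (d + 1) / (Nat.factorial (d + 1)) := by ring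

/-- Quantitative order of accuracy of MLS: if the nodes lie in
`B̄(x₀, r)`, the coefficients reproduce `Π_d(ℝⁿ)` at `x₀` with `Σᵢ |aᵢ| ≤ Λ`, and `f` is
`C^{d+1}` on an open convex set `U ⊇ B̄(x₀, r)` with `‖D^{d+1}f‖ ≤ M` on `U`, then
`|f(x₀) − Σᵢ aᵢ f(xᵢ)| ≤ (1 + Λ) · M · r^{d+1} / (d+1)!`. -/
theorem MLS_order_of_accuracy
    (n N d : ℕ)
    (x₀ : EuclideanSpace ℝ (Fin n)) (r : ℝ) (hr : 0 < r)
    (x : Fin N → EuclideanSpace ℝ (Fin n))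
    (hx : ∀ i, x i ∈ Metric.closedBall x₀ r)
    (a : Fin N → ℝ)
    (hrepro : ∀ π : MvPolynomial (Fin n) ℝ, π.totalDegree ≤ d →
      ∑ i, a i * MvPolynomial.eval (x i) π = MvPolynomial.eval x₀ π)
    (Λ : ℝ) (hΛ : ∑ i, |a i| ≤ Λ)
    (U : Set (EuclideanSpace ℝ (Fin n))) (hU : IsOpen U) (hUconv : Convex ℝ U)
    (hUball : Metric.closedBall x₀ r ⊆ U)
    (f : EuclideanSpace ℝ (Fin n) → ℝ) (M : ℝ)
    (hf : ContDiffOn ℝ (d + 1) f U)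
    (hM : ∀ y ∈ U, ‖iteratedFDerivWithin ℝ (d + 1) f U y‖ ≤ M) :
    |f x₀ - ∑ i, a i * f (x i)| ≤
      (1 + Λ) * M * r ^ (d + 1) / (Nat.factorial (d + 1)) :=
  MLS_order_of_accuracy_general n N d x₀ r hr x hx a hrepro Λ hΛ U hU hUball f M hf hM
end

section
/- (Property P1 of the smoothness indicator: smooth data give I = O(δ²).) Let δ > 0, let z₁,…,z_M ∈ ℝⁿ lie in the closed ball B̄(x_c, δ) around some center x_c, and let f : ℝⁿ → ℝ be of class C² on an open convex set U containing B̄(x_c, δ) with ‖D²f(y)‖ ≤ M₂ for all y ∈ U. Let p* be any affine function (polynomial of total degree ≤ 1 on ℝⁿ) minimizing Σ_{j=1}^M (f(z_j) − p(z_j))² over all affine p. Then the smoothness indicator I = (1/M) Σ_{j=1}^M |f(z_j) − p*(z_j)| satisfies I ≤ (M₂/2) δ². -/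
/-!
The Taylor polynomial `p₀(x) = f(x_c) + Df(x_c)(x - x_c)` is affine and, by the second-order
Taylor estimate, misfits every stencil point by at most `(M₂/2) δ²`. The least-squares fit `p*`
has a sum of squared residuals no larger than that of `p₀`, so its root mean square residual is at
most `(M₂/2) δ²`, and by Cauchy–Schwarz so is its mean absolute residual `I`.
-/

open Metric Set

def IsAffineFn {n : ℕ} (p : EuclideanSpace ℝ (Fin n) → ℝ) : Prop :=
  ∃ (L : EuclideanSpace ℝ (Fin n) →ₗ[ℝ] ℝ) (c : ℝ), ∀ x, p x = L x + c

section Taylor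

variable {E F : Type*} [NormedAddCommGroup E] [NormedSpace ℝ E]
  [NormedAddCommGroup F] [NormedSpace ℝ F]
  {U : Set E} {f : E → F} {M₂ : ℝ} {x y : E}

theorem norm_fderivWithin_sub_le_of_norm_iteratedFDerivWithin_two_le
    (hU : IsOpen U) (hUconv : Convex ℝ U) (hf : ContDiffOn ℝ 2 f U)
    (hM₂ : ∀ w ∈ U, ‖iteratedFDerivWithin ℝ 2 f U w‖ ≤ M₂) (hx : x ∈ U) (hy : y ∈ U) :
    ‖fderivWithin ℝ f U y - fderivWithin ℝ f U x‖ ≤ M₂ * ‖y - x‖ := by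
  have hUD : UniqueDiffOn ℝ U := hU.uniqueDiffOn
  refine hUconv.norm_image_sub_le_of_norm_fderivWithin_le
    ((hf.fderivWithin hUD (by norm_num : (1 : WithTop ℕ∞) + 1 ≤ 2)).differentiableOn one_ne_zero)
    (fun w hw => ?_) hx hy
  rw [← norm_iteratedFDerivWithin_one _ (hUD w hw), norm_iteratedFDerivWithin_fderivWithin hUD hw]
  exact hM₂ w hw

/-- The remainder `t ↦ f(x + t d) - f x - t Df(x) d` vanishes at `0` and its derivative is
bounded by `M₂ ‖d‖² t`, so it is fenced by `M₂ ‖d‖² t² / 2` on `[0, 1]`. -/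
theorem norm_sub_sub_fderivWithin_le_of_norm_iteratedFDerivWithin_two_le
    (hU : IsOpen U) (hUconv : Convex ℝ U) (hf : ContDiffOn ℝ 2 f U)
    (hM₂ : ∀ w ∈ U, ‖iteratedFDerivWithin ℝ 2 f U w‖ ≤ M₂) (hx : x ∈ U) (hy : y ∈ U) :
    ‖f y - f x - fderivWithin ℝ f U x (y - x)‖ ≤ M₂ / 2 * ‖y - x‖ ^ 2 := by
  set d := y - x
  set f' := fderivWithin ℝ f U
  have hseg : ∀ t ∈ Icc (0 : ℝ) 1, x + t • d ∈ U := fun t ht => hUconv.add_smul_sub_mem hx hy ht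
  have hderiv : ∀ t ∈ Icc (0 : ℝ) 1, HasDerivAt (fun s : ℝ => f (x + s • d) - f x - s • f' x d)
      (f' (x + t • d) d - f' x d) t := by
    intro t ht
    have hfd : HasFDerivAt f (f' (x + t • d)) (x + t • d) :=
      ((hf.differentiableOn (by norm_num) _ (hseg t ht)).hasFDerivWithinAt).hasFDerivAt
        (hU.mem_nhds (hseg t ht))
    have hline : HasDerivAt (fun s : ℝ => x + s • d) d t := by
      simpa using ((hasDerivAt_id t).smul_const d).const_add x
    have h := ((hfd.comp_hasDerivAt t hline).sub_const (f x)).sub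
      ((hasDerivAt_id t).smul_const (f' x d))
    rwa [one_smul] at h
  have hfence := image_norm_le_of_norm_deriv_right_le_deriv_boundary
    (a := 0) (b := 1) (B := fun t => M₂ / 2 * ‖d‖ ^ 2 * t ^ 2) (B' := fun t => M₂ * ‖d‖ ^ 2 * t)
    (fun t ht => (hderiv t ht).continuousAt.continuousWithinAt)
    (fun t ht => (hderiv t (Ico_subset_Icc_self ht)).hasDerivWithinAt)
    (by simp)
    (fun t => ((hasDerivAt_pow 2 t).const_mul (M₂ / 2 * ‖d‖ ^ 2)).congr_deriv (by ring))
    (fun t ht => calc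
      ‖f' (x + t • d) d - f' x d‖ ≤ ‖f' (x + t • d) - f' x‖ * ‖d‖ :=
        (f' (x + t • d) - f' x).le_opNorm d
      _ ≤ M₂ * ‖t • d‖ * ‖d‖ := by
        gcongr
        simpa using norm_fderivWithin_sub_le_of_norm_iteratedFDerivWithin_two_le hU hUconv hf hM₂
          hx (hseg t (Ico_subset_Icc_self ht))
      _ = M₂ * ‖d‖ ^ 2 * t := by
        rw [norm_smul, Real.norm_of_nonneg ht.1]
        ring)
    (right_mem_Icc.2 zero_le_one)
  simpa [d] using hfence

end Taylor

theorem isAffineFn_const_add_sub {n : ℕ} (L : EuclideanSpace ℝ (Fin n) →L[ℝ] ℝ)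
    (a : EuclideanSpace ℝ (Fin n)) (c : ℝ) : IsAffineFn fun x => c + L (x - a) :=
  ⟨L.toLinearMap, c - L a, fun x => by simp only [map_sub, ContinuousLinearMap.coe_coe]; ring⟩

theorem mean_abs_le_of_sum_sq_le {ι : Type*} [Fintype ι] {e : ι → ℝ} {K : ℝ} (hK : 0 ≤ K)
    (he : ∑ i, e i ^ 2 ≤ Fintype.card ι * K ^ 2) :
    1 / (Fintype.card ι : ℝ) * ∑ i, |e i| ≤ K := by
  have hsum : ∑ i, |e i| ≤ Fintype.card ι * K := by
    refine abs_le_of_sq_le_sq' ?_ (by positivity) |>.2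
    calc (∑ i, |e i|) ^ 2 ≤ Fintype.card ι * ∑ i, |e i| ^ 2 := by
          simpa using sq_sum_le_card_mul_sum_sq (s := Finset.univ) (f := fun i => |e i|)
      _ ≤ Fintype.card ι * (Fintype.card ι * K ^ 2) := by
          simp only [sq_abs]
          gcongr
      _ = (Fintype.card ι * K) ^ 2 := by ring
  calc 1 / (Fintype.card ι : ℝ) * ∑ i, |e i|
      _ ≤ 1 / (Fintype.card ι : ℝ) * (Fintype.card ι * K) := by gcongr
      _ ≤ K := by
          rw [← mul_assoc, one_div]
          exact mul_le_of_le_one_left hK inv_mul_le_one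

theorem smoothness_indicator_P1_general
    (n M : ℕ) (δ : ℝ) (hδ : 0 < δ)
    (xc : EuclideanSpace ℝ (Fin n))
    (z : Fin M → EuclideanSpace ℝ (Fin n))
    (hz : ∀ j, z j ∈ Metric.closedBall xc δ)
    (U : Set (EuclideanSpace ℝ (Fin n))) (hU : IsOpen U) (hUconv : Convex ℝ U)
    (hUball : Metric.closedBall xc δ ⊆ U)
    (f : EuclideanSpace ℝ (Fin n) → ℝ) (M₂ : ℝ)
    (hf : ContDiffOn ℝ 2 f U)
    (hM₂ : ∀ y ∈ U, ‖iteratedFDerivWithin ℝ 2 f U y‖ ≤ M₂)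
    (pstar : EuclideanSpace ℝ (Fin n) → ℝ)
    (hpstar_min : ∀ p : EuclideanSpace ℝ (Fin n) → ℝ, IsAffineFn p →
      ∑ j, (f (z j) - pstar (z j)) ^ 2 ≤ ∑ j, (f (z j) - p (z j)) ^ 2) :
    (1 / (M : ℝ)) * ∑ j, |f (z j) - pstar (z j)| ≤ (M₂ / 2) * δ ^ 2 := by
  have hxc : xc ∈ U := hUball (mem_closedBall_self hδ.le)
  have hM₂_nonneg : 0 ≤ M₂ := (norm_nonneg _).trans (hM₂ xc hxc)
  set p₀ := fun x => f xc + fderivWithin ℝ f U xc (x - xc)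
  have htaylor : ∀ j, (f (z j) - p₀ (z j)) ^ 2 ≤ (M₂ / 2 * δ ^ 2) ^ 2 := fun j => by
    have hdist : ‖z j - xc‖ ≤ δ := mem_closedBall_iff_norm.1 (hz j)
    have hrem : |f (z j) - p₀ (z j)| ≤ M₂ / 2 * δ ^ 2 :=
      calc |f (z j) - p₀ (z j)| = ‖f (z j) - f xc - fderivWithin ℝ f U xc (z j - xc)‖ := by
            rw [Real.norm_eq_abs, sub_sub]
        _ ≤ M₂ / 2 * ‖z j - xc‖ ^ 2 :=
            norm_sub_sub_fderivWithin_le_of_norm_iteratedFDerivWithin_two_le hU hUconv hf hM₂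
              hxc (hUball (hz j))
        _ ≤ M₂ / 2 * δ ^ 2 := by gcongr
    simpa only [sq_abs] using pow_le_pow_left₀ (abs_nonneg _) hrem 2
  have hsq : ∑ j, (f (z j) - pstar (z j)) ^ 2 ≤ M * (M₂ / 2 * δ ^ 2) ^ 2 :=
    calc ∑ j, (f (z j) - pstar (z j)) ^ 2 ≤ ∑ j, (f (z j) - p₀ (z j)) ^ 2 :=
          hpstar_min p₀ (isAffineFn_const_add_sub _ xc _)
      _ ≤ M * (M₂ / 2 * δ ^ 2) ^ 2 := by
          simpa using Finset.sum_le_sum fun j (_ : j ∈ Finset.univ) => htaylor j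
  simpa using mean_abs_le_of_sum_sq_le (e := fun j => f (z j) - pstar (z j)) (K := M₂ / 2 * δ ^ 2)
    (by positivity) (by simpa using hsq)

/-- Property P1 of the smoothness indicator: if the stencil points lie
in `B̄(x_c, δ)` and `f` is `C²` on an open convex `U ⊇ B̄(x_c, δ)` with `‖D²f‖ ≤ M₂`,
then the smoothness indicator `I = (1/M) Σⱼ |f(zⱼ) − p*(zⱼ)|` built from any least-squares
affine fit `p*` satisfies `I ≤ (M₂/2) δ²`. -/
theorem smoothness_indicator_P1
    (n M : ℕ) (hM : 0 < M) (δ : ℝ) (hδ : 0 < δ)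
    (xc : EuclideanSpace ℝ (Fin n))
    (z : Fin M → EuclideanSpace ℝ (Fin n))
    (hz : ∀ j, z j ∈ Metric.closedBall xc δ)
    (U : Set (EuclideanSpace ℝ (Fin n))) (hU : IsOpen U) (hUconv : Convex ℝ U)
    (hUball : Metric.closedBall xc δ ⊆ U)
    (f : EuclideanSpace ℝ (Fin n) → ℝ) (M₂ : ℝ)
    (hf : ContDiffOn ℝ 2 f U)
    (hM₂ : ∀ y ∈ U, ‖iteratedFDerivWithin ℝ 2 f U y‖ ≤ M₂)
    (pstar : EuclideanSpace ℝ (Fin n) → ℝ)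
    (hpstar_affine : IsAffineFn pstar)
    (hpstar_min : ∀ p : EuclideanSpace ℝ (Fin n) → ℝ, IsAffineFn p →
      ∑ j, (f (z j) - pstar (z j)) ^ 2 ≤ ∑ j, (f (z j) - p (z j)) ^ 2) :
    (1 / (M : ℝ)) * ∑ j, |f (z j) - pstar (z j)| ≤ (M₂ / 2) * δ ^ 2 :=
  smoothness_indicator_P1_general n M δ hδ xc z hz U hU hUconv hUball f M₂ hf hM₂ pstar hpstar_min
end

section
/- (Quantitative accuracy of the data-dependent MLS near a discontinuity.) Let d ≥ 0 and x₀ ∈ ℝⁿ. Let x₁,…,x_N ∈ ℝⁿ be nodes partitioned into two disjoint index sets F (non-infected) and D (infected), with positive weights w₁,…,w_N satisfying w_i ≥ μ > 0 for i ∈ F. Let f₁,…,f_N ∈ ℝ be data values, and let p̂ ∈ Π_d(ℝⁿ) minimize Σ_{i=1}^N w_i (f_i − p(x_i))² over Π_d(ℝⁿ). Suppose there exist π ∈ Π_d(ℝⁿ) and constants ε₁, ε₂ ≥ 0 such that |f_i − π(x_i)| ≤ ε₁ for all i ∈ F and |f_i − π(x_i)| ≤ ε₂ for all i ∈ D. Suppose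 further there is a subset P ⊆ F and a constant Λ ≥ 0 such that every q ∈ Π_d(ℝⁿ) satisfies |q(x₀)| ≤ Λ · max_{j ∈ P} |q(x_j)|. Set S = (Σ_{i ∈ F} w_i) ε₁² + (Σ_{i ∈ D} w_i) ε₂². Then |π(x₀) − p̂(x₀)| ≤ Λ (ε₁ + √(S/μ)). -/
open scoped BigOperators

/-- Quantitative accuracy of the data-dependent MLS near a
discontinuity: with nodes split into non-infected indices `F` (weights `≥ μ > 0`) and
infected indices `D`, `p̂` the weighted least-squares polynomial fit of degree `≤ d`,
`π ∈ Π_d` approximating the data within `ε₁` on `F` and `ε₂` on `D`, a subset `P ⊆ F`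
with `|q(x₀)| ≤ Λ·max_{j ∈ P}|q(xⱼ)|` for all `q ∈ Π_d`, and
`S = (Σ_{i∈F} wᵢ)ε₁² + (Σ_{i∈D} wᵢ)ε₂²`, we have
`|π(x₀) − p̂(x₀)| ≤ Λ(ε₁ + √(S/μ))`. -/
theorem DD_MLS_accuracy_near_discontinuity
    (n N d : ℕ)
    (x₀ : Fin n → ℝ) (x : Fin N → (Fin n → ℝ))
    (F D : Finset (Fin N)) (hFD : Disjoint F D) (hFDunion : F ∪ D = Finset.univ)
    (w : Fin N → ℝ) (hw : ∀ i, 0 < w i)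
    (μ : ℝ) (hμ : 0 < μ) (hwF : ∀ i ∈ F, μ ≤ w i)
    (f : Fin N → ℝ)
    (phat : MvPolynomial (Fin n) ℝ) (hphat_deg : phat.totalDegree ≤ d)
    (hphat_min : ∀ p : MvPolynomial (Fin n) ℝ, p.totalDegree ≤ d →
      ∑ i, w i * (f i - MvPolynomial.eval (x i) phat) ^ 2 ≤
        ∑ i, w i * (f i - MvPolynomial.eval (x i) p) ^ 2)
    (π : MvPolynomial (Fin n) ℝ) (hπ_deg : π.totalDegree ≤ d)
    (ε₁ ε₂ : ℝ) (hε₁ : 0 ≤ ε₁) (hε₂ : 0 ≤ ε₂)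
    (hπF : ∀ i ∈ F, |f i - MvPolynomial.eval (x i) π| ≤ ε₁)
    (hπD : ∀ i ∈ D, |f i - MvPolynomial.eval (x i) π| ≤ ε₂)
    (P : Finset (Fin N)) (hP : P.Nonempty) (hPF : P ⊆ F)
    (Λ : ℝ) (hΛ : 0 ≤ Λ)
    (hnorm : ∀ q : MvPolynomial (Fin n) ℝ, q.totalDegree ≤ d →
      |MvPolynomial.eval x₀ q| ≤
        Λ * (P.sup' hP fun j => |MvPolynomial.eval (x j) q|))
    (S : ℝ)
    (hS : S = (∑ i ∈ F, w i) * ε₁ ^ 2 + (∑ i ∈ D, w i) * ε₂ ^ 2) :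
    |MvPolynomial.eval x₀ π - MvPolynomial.eval x₀ phat| ≤
      Λ * (ε₁ + Real.sqrt (S / μ)) := by

  -- degree of π - phat
  have hdeg : (π - phat).totalDegree ≤ d := by
    rw [sub_eq_add_neg]
    refine le_trans (MvPolynomial.totalDegree_add _ _) ?_
    rw [MvPolynomial.totalDegree_neg]
    exact max_le hπ_deg hphat_deg
  -- residual sum for phat is at most S
  have hterm_nonneg : ∀ i : Fin N, 0 ≤ w i * (f i - MvPolynomial.eval (x i) phat) ^ 2 :=
    fun i => mul_nonneg (hw i).le (sq_nonneg _)
  have hsumS : ∑ i, w i * (f i - MvPolynomial.eval (x i) phat) ^ 2 ≤ S := by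
    refine le_trans (hphat_min π hπ_deg) ?_
    rw [hS, ← hFDunion, Finset.sum_union hFD, Finset.sum_mul, Finset.sum_mul]
    refine add_le_add (Finset.sum_le_sum fun i hi => ?_) (Finset.sum_le_sum fun i hi => ?_)
    · exact mul_le_mul_of_nonneg_left (sq_le_sq' (by linarith [(abs_le.mp (hπF i hi)).1])
        (by linarith [(abs_le.mp (hπF i hi)).2])) (hw i).le
    · exact mul_le_mul_of_nonneg_left (sq_le_sq' (by linarith [(abs_le.mp (hπD i hi)).1])
        (by linarith [(abs_le.mp (hπD i hi)).2])) (hw i).le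
  -- pointwise bound at nodes in P
  have hpt : ∀ j ∈ P, |f j - MvPolynomial.eval (x j) phat| ≤ Real.sqrt (S / μ) := by
    intro j hj
    refine Real.abs_le_sqrt ?_
    rw [le_div_iff₀ hμ]
    have h1 : μ * (f j - MvPolynomial.eval (x j) phat) ^ 2 ≤
        w j * (f j - MvPolynomial.eval (x j) phat) ^ 2 :=
      mul_le_mul_of_nonneg_right (hwF j (hPF hj)) (sq_nonneg _)
    have h2 : w j * (f j - MvPolynomial.eval (x j) phat) ^ 2 ≤
        ∑ i, w i * (f i - MvPolynomial.eval (x i) phat) ^ 2 :=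
      Finset.single_le_sum (fun i _ => hterm_nonneg i) (Finset.mem_univ j)
    linarith
  have hsup : (P.sup' hP fun j => |MvPolynomial.eval (x j) (π - phat)|) ≤
      ε₁ + Real.sqrt (S / μ) := by
    refine Finset.sup'_le _ _ fun j hj => ?_
    have := hπF j (hPF hj)
    have h2 := hpt j hj
    rw [map_sub]
    have : MvPolynomial.eval (x j) π - MvPolynomial.eval (x j) phat =
        -(f j - MvPolynomial.eval (x j) π) + (f j - MvPolynomial.eval (x j) phat) := by ring
    rw [this]
    calc _ ≤ |-(f j - MvPolynomial.eval (x j) π)| + |f j - MvPolynomial.eval (x j) phat| :=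
        abs_add_le _ _
      _ ≤ ε₁ + Real.sqrt (S / μ) := by rw [abs_neg]; exact add_le_add (hπF j (hPF hj)) h2
  have := hnorm (π - phat) hdeg
  rw [map_sub] at this
  exact this.trans (mul_le_mul_of_nonneg_left hsup hΛ)
end
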